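/- Let S be a real n×n matrix, κ > 0, ε ∈ (0,1], H an invertible real n×n matrix, and L a real n×n matrix such that S = H L H⁻¹, ‖L‖ ≤ 1 − ε, and ‖H‖·‖H⁻¹‖ ≤ κ. Then the series Σ_{i=0}^∞ (Sᵀ)^i S^i converges and ‖Σ_{i=0}^∞ (Sᵀ)^i S^i‖ ≤ κ²/(ε(2 − ε)) ≤ κ²/ε. -/

import Mathlib

open Matrix

/-- The spectral norm (operator 2-norm) of a real matrix. -/
noncomputable def specNorm {m n : ℕ} (M : Matrix (Fin m) (Fin n) ℝ) : ℝ :=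
  ‖LinearMap.toContinuousLinearMap (Matrix.toEuclideanLin M)‖

/-!
Conjugating by `H` costs at most the condition number, so `‖S ^ i‖ ≤ κ (1 - ε) ^ i`, and the
C⋆-identity `‖Mᵀ M‖ = ‖M‖²` turns this into `‖(Sᵀ) ^ i S ^ i‖ ≤ κ² ((1 - ε)²) ^ i`. The series is
therefore dominated by a geometric series with sum `κ² / (1 - (1 - ε)²) = κ² / (ε (2 - ε))`.
-/

section NormedRing

variable {α : Type*} [SeminormedRing α]

theorem norm_mul_pow_mul_le (a b c : α) (i : ℕ) : ‖a * b ^ i * c‖ ≤ ‖a‖ * ‖b‖ ^ i * ‖c‖ := by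
  rcases i.eq_zero_or_pos with rfl | hi
  · simpa using norm_mul_le a c
  · calc ‖a * b ^ i * c‖ ≤ ‖a‖ * ‖b ^ i‖ * ‖c‖ := norm_mul₃_le
      _ ≤ ‖a‖ * ‖b‖ ^ i * ‖c‖ := by gcongr; exact norm_pow_le' b hi

theorem Units.norm_conj_pow_le (u : αˣ) (x : α) (i : ℕ) :
    ‖((u : α) * x * ↑u⁻¹) ^ i‖ ≤ ‖(u : α)‖ * ‖(↑u⁻¹ : α)‖ * ‖x‖ ^ i := by
  rw [Units.conj_pow, mul_right_comm ‖(u : α)‖]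
  exact norm_mul_pow_mul_le _ _ _ i

end NormedRing

theorem summable_and_norm_tsum_le_of_norm_le_geometric {E : Type*} [NormedAddCommGroup E]
    [CompleteSpace E] {f : ℕ → E} {C r : ℝ} (hr₀ : 0 ≤ r) (hr₁ : r < 1)
    (hf : ∀ i, ‖f i‖ ≤ C * r ^ i) :
    Summable f ∧ ‖∑' i, f i‖ ≤ C / (1 - r) := by
  have hgeom : HasSum (fun i ↦ C * r ^ i) (C / (1 - r)) := by
    simpa [div_eq_mul_inv] using (hasSum_geometric_of_lt_one hr₀ hr₁).mul_left C
  exact ⟨.of_norm_bounded hgeom.summable hf, tsum_of_norm_bounded hgeom hf⟩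

open scoped Matrix.Norms.L2Operator in
theorem specNorm_eq_l2_opNorm {m n : ℕ} (M : Matrix (Fin m) (Fin n) ℝ) : specNorm M = ‖M‖ := rfl

namespace Matrix

open scoped Matrix.Norms.L2Operator

variable {n : Type*} [Fintype n] [DecidableEq n]

theorem l2_opNorm_conj_pow_le {H : Matrix n n ℝ} (hH : IsUnit H) (L : Matrix n n ℝ) (i : ℕ) :
    ‖(H * L * H⁻¹) ^ i‖ ≤ ‖H‖ * ‖H⁻¹‖ * ‖L‖ ^ i := by
  obtain ⟨u, rfl⟩ := hH
  rw [← coe_units_inv]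
  exact u.norm_conj_pow_le L i

theorem l2_opNorm_transpose_pow_mul_pow (S : Matrix n n ℝ) (i : ℕ) :
    ‖Sᵀ ^ i * S ^ i‖ = ‖S ^ i‖ ^ 2 := by
  rw [← transpose_pow, ← conjTranspose_eq_transpose_of_trivial, l2_opNorm_conjTranspose_mul_self,
    sq]

end Matrix

theorem stmt_10_general {n : ℕ} (S : Matrix (Fin n) (Fin n) ℝ)
    (κ ε : ℝ) (hε : 0 < ε)
    (H L : Matrix (Fin n) (Fin n) ℝ) (hH : IsUnit H)
    (hdecomp : S = H * L * H⁻¹)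
    (hL : specNorm L ≤ 1 - ε)
    (hHnorm : specNorm H * specNorm H⁻¹ ≤ κ) :
    Summable (fun i : ℕ => Sᵀ ^ i * S ^ i) ∧
    specNorm (∑' i : ℕ, Sᵀ ^ i * S ^ i) ≤ κ ^ 2 / (ε * (2 - ε)) ∧
    κ ^ 2 / (ε * (2 - ε)) ≤ κ ^ 2 / ε := by
  open scoped Matrix.Norms.L2Operator in
  simp only [specNorm_eq_l2_opNorm] at hL hHnorm ⊢
  have : CompleteSpace (Matrix (Fin n) (Fin n) ℝ) := FiniteDimensional.complete ℝ _
  have hκ : 0 ≤ κ := (mul_nonneg (norm_nonneg _) (norm_nonneg _)).trans hHnorm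
  have hε₁ : 0 ≤ 1 - ε := (norm_nonneg L).trans hL
  have hpow (i : ℕ) : ‖S ^ i‖ ≤ κ * (1 - ε) ^ i := by
    rw [hdecomp]
    exact (l2_opNorm_conj_pow_le hH L i).trans (by gcongr)
  have hterm (i : ℕ) : ‖Sᵀ ^ i * S ^ i‖ ≤ κ ^ 2 * ((1 - ε) ^ 2) ^ i := by
    rw [l2_opNorm_transpose_pow_mul_pow, ← pow_mul, mul_comm 2, pow_mul, ← mul_pow]
    gcongr
    exact hpow i
  obtain ⟨hsum, hnorm⟩ := summable_and_norm_tsum_le_of_norm_le_geometric (sq_nonneg (1 - ε))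
    (by nlinarith) hterm
  refine ⟨hsum, hnorm.trans_eq (by ring_nf), ?_⟩
  gcongr
  nlinarith

/-- Equation (22) of the paper: for a matrix `S = H L H⁻¹` coming from a
`(κ, ε)`-strongly stable policy, the series `Σ_{i=0}^∞ (Sᵀ)^i S^i` converges
and its spectral norm is at most `κ²/(ε(2 − ε)) ≤ κ²/ε`. -/
theorem stmt_10 {n : ℕ} (S : Matrix (Fin n) (Fin n) ℝ)
    (κ ε : ℝ) (hκ : 0 < κ) (hε : 0 < ε) (hε1 : ε ≤ 1)
    (H L : Matrix (Fin n) (Fin n) ℝ) (hH : IsUnit H)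
    (hdecomp : S = H * L * H⁻¹)
    (hL : specNorm L ≤ 1 - ε)
    (hHnorm : specNorm H * specNorm H⁻¹ ≤ κ) :
    Summable (fun i : ℕ => Sᵀ ^ i * S ^ i) ∧
    specNorm (∑' i : ℕ, Sᵀ ^ i * S ^ i) ≤ κ ^ 2 / (ε * (2 - ε)) ∧
    κ ^ 2 / (ε * (2 - ε)) ≤ κ ^ 2 / ε :=
  stmt_10_general S κ ε hε H L hH hdecomp hL hHnorm
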